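/- Let n ≥ 1, let F be a real antisymmetric n×n matrix, let A ∈ ℝⁿ and m ∈ ℝ. For co-oriented timelike vectors t, ξ ∈ ℝⁿ (η(t,t) < 0, η(ξ,ξ) < 0, η(t,ξ) < 0), the contracted Maxwell/Proca stress tensor T(t,ξ) = ∑_{a,b,c,d} t_a ξ_b F_{ac} η_{cd} F_{bd} − (1/4)·η(t,ξ)·(F·F) + m²·((∑_a A_a t_a)(∑_b A_b ξ_b) − (1/2)·η(t,ξ)·η(A,A)) is nonnegative, where F·F = ∑_{c,d,e,f} F_{cd} η_{ce} η_{df} F_{ef}: the Maxwell and Proca fields satisfy the dominant energy condition pointwise, off-shell. -/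

import Mathlib

open scoped BigOperators

/-- The Minkowski bilinear form on `ℝⁿ`: `η(x,y) = -x₀y₀ + ∑_{i≥1} xᵢyᵢ`. -/
def minkowski {n : ℕ} (x y : Fin n → ℝ) : ℝ :=
  ∑ i : Fin n, (if (i : ℕ) = 0 then (-1 : ℝ) else 1) * x i * y i

/-- The Minkowski metric matrix `diag(−1,1,…,1)`. -/
def etaMat (n : ℕ) : Matrix (Fin n) (Fin n) ℝ :=
  fun i j => if i = j then (if (i : ℕ) = 0 then -1 else 1) else 0

/-- The full contraction `F^{cd} F_{cd} = ∑ F_{cd} η_{ce} η_{df} F_{ef}`. -/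
def FdotF {n : ℕ} (F : Matrix (Fin n) (Fin n) ℝ) : ℝ :=
  ∑ c : Fin n, ∑ d : Fin n, ∑ e : Fin n, ∑ f : Fin n,
    F c d * etaMat n c e * etaMat n d f * F e f

/-- The Maxwell/Proca stress tensor contracted with vectors `t` and `u`:
`T(t,u) = ∑ t_a u_b F_{ac} η_{cd} F_{bd} − (1/4) η(t,u) F·F
          + m² ((A·t)(A·u) − (1/2) η(t,u) η(A,A))`. -/
noncomputable def procaT {n : ℕ} (F : Matrix (Fin n) (Fin n) ℝ) (A : Fin n → ℝ) (m : ℝ)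
    (t u : Fin n → ℝ) : ℝ :=
  (∑ a : Fin n, ∑ b : Fin n, ∑ c : Fin n, ∑ d : Fin n,
      t a * u b * F a c * etaMat n c d * F b d)
    - (1/4) * minkowski t u * FdotF F
    + m^2 * ((∑ a : Fin n, A a * t a) * (∑ b : Fin n, A b * u b)
              - (1/2) * minkowski t u * minkowski A A)

/-!
`T` is a symmetric bilinear form in `(t, ξ)` with `T(-t, -ξ) = T(t, ξ)`, so both vectors may be
taken future-directed, and every future causal vector is a nonnegative combination of the two
future null vectors `(1, ±u)`, `‖u‖ = 1`. So it suffices to show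
`T((1,u),(1,w)) ≥ 0` for unit spatial `u, w` (in dimension one `F = 0` and `T = m²A₀²t₀ξ₀/2`).
Writing `Eᵢ = F₀ᵢ` and `B` for the skew spatial block of `F`, this splits into two Euclidean
inequalities in the orthogonal pair `p = u + w`, `q = u - w` with `‖p‖² + ‖q‖² = 4`: the Proca
one is Bessel's inequality for `p, q`; the Maxwell one follows from the bound
`‖x B‖² ≤ ‖x‖² ‖B‖²_F / 2` for skew `B`, applied to `B` and to its compression onto `pᗮ`,
together with Cauchy–Schwarz.
-/

open Matrix

section Euclidean

variable {ι : Type*} [Fintype ι]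

lemma dotProduct_self_nonneg (x : ι → ℝ) : 0 ≤ x ⬝ᵥ x :=
  Finset.sum_nonneg fun i _ => mul_self_nonneg (x i)

lemma sq_dotProduct_le (x y : ι → ℝ) : (x ⬝ᵥ y) ^ 2 ≤ (x ⬝ᵥ x) * (y ⬝ᵥ y) := by
  simpa [dotProduct, sq] using Finset.sum_mul_sq_le_sq_mul_sq Finset.univ x y

def frobeniusSq (B : Matrix ι ι ℝ) : ℝ := ∑ i, B i ⬝ᵥ B i

lemma frobeniusSq_nonneg (B : Matrix ι ι ℝ) : 0 ≤ frobeniusSq B :=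
  Finset.sum_nonneg fun i _ => dotProduct_self_nonneg (B i)

lemma sq_dotProduct_add_sq_dotProduct_le {p q : ι → ℝ} (hpq : p ⬝ᵥ q = 0) (a : ι → ℝ) :
    (q ⬝ᵥ q) * (p ⬝ᵥ a) ^ 2 + (p ⬝ᵥ p) * (q ⬝ᵥ a) ^ 2 ≤ (p ⬝ᵥ p) * (q ⬝ᵥ q) * (a ⬝ᵥ a) := by
  rcases (dotProduct_self_nonneg p).eq_or_lt with hp | hp
  · simp [dotProduct_self_eq_zero.mp hp.symm]
  rcases (dotProduct_self_nonneg q).eq_or_lt with hq | hq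
  · simp [dotProduct_self_eq_zero.mp hq.symm]
  have h := dotProduct_self_nonneg
    (((p ⬝ᵥ p) * (q ⬝ᵥ q)) • a - ((q ⬝ᵥ q) * (p ⬝ᵥ a)) • p - ((p ⬝ᵥ p) * (q ⬝ᵥ a)) • q)
  simp only [sub_dotProduct, dotProduct_sub, smul_dotProduct, dotProduct_smul, smul_eq_mul,
    dotProduct_comm a p, dotProduct_comm a q, dotProduct_comm q p, hpq] at h
  have hpq' : 0 < (p ⬝ᵥ p) * (q ⬝ᵥ q) := mul_pos hp hq
  nlinarith

end Euclidean

section SkewSymmetric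

variable {ι : Type*} {B : Matrix ι ι ℝ}

lemma apply_eq_neg_of_transpose_eq_neg (hB : Bᵀ = -B) (i j : ι) : B i j = -B j i := by
  simpa using congrFun (congrFun hB j) i

lemma apply_self_eq_zero_of_transpose_eq_neg (hB : Bᵀ = -B) (i : ι) : B i i = 0 := by
  linarith [apply_eq_neg_of_transpose_eq_neg hB i i]

variable [Fintype ι]

lemma vecMul_dotProduct_of_transpose_eq_neg (hB : Bᵀ = -B) (x y : ι → ℝ) :
    (x ᵥ* B) ⬝ᵥ y = -((y ᵥ* B) ⬝ᵥ x) := by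
  rw [← dotProduct_mulVec, ← vecMul_transpose, hB, vecMul_neg, dotProduct_neg, dotProduct_comm]

lemma vecMul_dotProduct_self_of_transpose_eq_neg (hB : Bᵀ = -B) (x : ι → ℝ) :
    (x ᵥ* B) ⬝ᵥ x = 0 := by
  linarith [vecMul_dotProduct_of_transpose_eq_neg hB x x]

/-- `(x ⬝ᵥ x) • Π B Π` for the orthogonal projection `Π` onto `xᗮ`, when `B` is skew. -/
def perpCompression (B : Matrix ι ι ℝ) (x : ι → ℝ) : Matrix ι ι ℝ :=
  (x ⬝ᵥ x) • B - (vecMulVec x (x ᵥ* B) - vecMulVec (x ᵥ* B) x)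

lemma perpCompression_transpose (hB : Bᵀ = -B) (x : ι → ℝ) :
    (perpCompression B x)ᵀ = -perpCompression B x := by
  simp only [perpCompression, transpose_sub, transpose_smul, hB, transpose_vecMulVec, smul_neg]
  abel

lemma vecMul_perpCompression {x y : ι → ℝ} (hxy : y ⬝ᵥ x = 0) :
    y ᵥ* perpCompression B x = (x ⬝ᵥ x) • (y ᵥ* B) + ((x ᵥ* B) ⬝ᵥ y) • x := by
  simp only [perpCompression, vecMul_sub, vecMul_smul, vecMul_vecMulVec, hxy, zero_smul,
    dotProduct_comm y]
  abel

lemma frobeniusSq_perpCompression (hB : Bᵀ = -B) (x : ι → ℝ) :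
    frobeniusSq (perpCompression B x)
      = (x ⬝ᵥ x) * ((x ⬝ᵥ x) * frobeniusSq B - 2 * ((x ᵥ* B) ⬝ᵥ (x ᵥ* B))) := by
  set X := x ᵥ* B
  have hXx : X ⬝ᵥ x = 0 := vecMul_dotProduct_self_of_transpose_eq_neg hB x
  have hXX : X ᵥ* B ⬝ᵥ x = -(X ⬝ᵥ X) := vecMul_dotProduct_of_transpose_eq_neg hB X x
  have hrow : ∀ (v w : ι → ℝ), ∑ i, v i * (B i ⬝ᵥ w) = (v ᵥ* B) ⬝ᵥ w := fun v w =>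
    dotProduct_mulVec v B w
  have hsum : ∀ (v w : ι → ℝ) (c : ℝ), ∑ i, v i * (w i * c) = (v ⬝ᵥ w) * c := fun v w c => by
    simp only [dotProduct, Finset.sum_mul, mul_assoc]
  have hrow_sq : ∀ i, perpCompression B x i ⬝ᵥ perpCompression B x i
      = (x ⬝ᵥ x) ^ 2 * (B i ⬝ᵥ B i) - 2 * (x ⬝ᵥ x) * (x i * (B i ⬝ᵥ X))
        + 2 * (x ⬝ᵥ x) * (X i * (B i ⬝ᵥ x)) + x i * (x i * (X ⬝ᵥ X))
        + X i * (X i * (x ⬝ᵥ x)) - 2 * (x i * (X i * (x ⬝ᵥ X))) := by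
    intro i
    have : perpCompression B x i = (x ⬝ᵥ x) • B i - (x i • X - X i • x) := by
      ext j; simp [perpCompression, vecMulVec_apply, mul_comm, X]
    rw [this]
    simp only [sub_dotProduct, dotProduct_sub, smul_dotProduct, dotProduct_smul, smul_eq_mul,
      dotProduct_comm X (B i), dotProduct_comm x (B i), dotProduct_comm X x]
    ring
  simp only [frobeniusSq, hrow_sq, Finset.sum_add_distrib, Finset.sum_sub_distrib, ← Finset.mul_sum,
    hrow, hsum]
  rw [dotProduct_comm x X, hXx, hXX]
  ring

lemma vecMul_dotProduct_self_le (hB : Bᵀ = -B) (x : ι → ℝ) :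
    (x ᵥ* B) ⬝ᵥ (x ᵥ* B) ≤ (x ⬝ᵥ x) * frobeniusSq B / 2 := by
  rcases (dotProduct_self_nonneg x).eq_or_lt with hx | hx
  · simp [dotProduct_self_eq_zero.mp hx.symm]
  · have h := frobeniusSq_nonneg (perpCompression B x)
    rw [frobeniusSq_perpCompression hB, mul_nonneg_iff_of_pos_left hx] at h
    linarith

lemma vecMul_dotProduct_self_add_le_of_orthogonal (hB : Bᵀ = -B) {p q : ι → ℝ} (hpq : p ⬝ᵥ q = 0) :
    (q ⬝ᵥ q) * ((p ᵥ* B) ⬝ᵥ (p ᵥ* B)) + (p ⬝ᵥ p) * ((q ᵥ* B) ⬝ᵥ (q ᵥ* B))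
      ≤ (p ⬝ᵥ p) * (q ⬝ᵥ q) * frobeniusSq B / 2 + ((p ᵥ* B) ⬝ᵥ q) ^ 2 := by
  rcases (dotProduct_self_nonneg p).eq_or_lt with hp | hp
  · simp [dotProduct_self_eq_zero.mp hp.symm]
  · have h := vecMul_dotProduct_self_le (perpCompression_transpose hB p) q
    rw [vecMul_perpCompression (by rwa [dotProduct_comm]), frobeniusSq_perpCompression hB] at h
    simp only [add_dotProduct, dotProduct_add, smul_dotProduct, dotProduct_smul, smul_eq_mul,
      vecMul_dotProduct_of_transpose_eq_neg hB q p, dotProduct_comm p (q ᵥ* B)] at h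
    nlinarith

end SkewSymmetric

section NullPairs

variable {ι : Type*} [Fintype ι] {B : Matrix ι ι ℝ}

lemma maxwell_nonneg_of_orthogonal (hB : Bᵀ = -B) {p q : ι → ℝ} (hpq : p ⬝ᵥ q = 0)
    (hpq4 : p ⬝ᵥ p + q ⬝ᵥ q = 4) (E : ι → ℝ) :
    0 ≤ (p ⬝ᵥ p) * (E ⬝ᵥ E) - (p ⬝ᵥ E) ^ 2 + (q ⬝ᵥ E) ^ 2 + 4 * (E ⬝ᵥ (p ᵥ* B))
      + (p ᵥ* B) ⬝ᵥ (p ᵥ* B) - (q ᵥ* B) ⬝ᵥ (q ᵥ* B) + (q ⬝ᵥ q) * frobeniusSq B / 2 := by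
  rcases (dotProduct_self_nonneg p).eq_or_lt with hP | hP
  · simp only [dotProduct_self_eq_zero.mp hP.symm, zero_dotProduct, zero_vecMul,
      dotProduct_zero] at hpq4 ⊢
    nlinarith [sq_nonneg (q ⬝ᵥ E), vecMul_dotProduct_self_le hB q]
  set X := p ᵥ* B
  -- `W` completes the square: with `P = p ⬝ᵥ p`, `Q = q ⬝ᵥ q`,
  -- `P * (P ‖E‖² - (p ⬝ᵥ E)² + 4 E ⬝ᵥ X + ‖X‖²) = ‖W‖² - Q ‖X‖²`.
  set W := (p ⬝ᵥ p) • E - (p ⬝ᵥ E) • p + (2 : ℝ) • X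
  have hpX : p ⬝ᵥ X = 0 := by
    rw [dotProduct_comm]; exact vecMul_dotProduct_self_of_transpose_eq_neg hB p
  have hWW : W ⬝ᵥ W = (p ⬝ᵥ p) ^ 2 * (E ⬝ᵥ E) - (p ⬝ᵥ p) * (p ⬝ᵥ E) ^ 2
      + 4 * (p ⬝ᵥ p) * (E ⬝ᵥ X) + 4 * (X ⬝ᵥ X) := by
    simp only [W, add_dotProduct, dotProduct_add, sub_dotProduct, dotProduct_sub, smul_dotProduct,
      dotProduct_smul, smul_eq_mul, dotProduct_comm X p, dotProduct_comm X E, dotProduct_comm E p,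
      hpX]
    ring
  have hqW : q ⬝ᵥ W = (p ⬝ᵥ p) * (q ⬝ᵥ E) + 2 * (X ⬝ᵥ q) := by
    simp only [W, dotProduct_add, dotProduct_sub, dotProduct_smul, smul_eq_mul,
      dotProduct_comm q p, hpq, dotProduct_comm q X]
    ring
  have hkey := vecMul_dotProduct_self_add_le_of_orthogonal hB hpq
  have hcs := sq_dotProduct_le q W
  suffices h : 0 ≤ W ⬝ᵥ W + (p ⬝ᵥ p) * (q ⬝ᵥ E) ^ 2 - (X ⬝ᵥ q) ^ 2 by
    refine (mul_nonneg_iff_of_pos_left hP).mp (h.trans ?_)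
    rw [hWW]
    linear_combination hkey - (X ⬝ᵥ X) * hpq4
  rcases (dotProduct_self_nonneg q).eq_or_lt with hQ | hQ
  · simp only [dotProduct_self_eq_zero.mp hQ.symm, dotProduct_zero, zero_dotProduct]
    nlinarith [dotProduct_self_nonneg W]
  · refine (mul_nonneg_iff_of_pos_left hQ).mp ?_
    rw [hqW] at hcs
    linear_combination hcs + mul_nonneg hP.le (sq_nonneg (2 * (q ⬝ᵥ E) + X ⬝ᵥ q))
      - ((p ⬝ᵥ p) * (q ⬝ᵥ E) ^ 2 - (X ⬝ᵥ q) ^ 2) * hpq4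

lemma proca_nonneg_of_orthogonal {p q : ι → ℝ} (hpq : p ⬝ᵥ q = 0)
    (hpq4 : p ⬝ᵥ p + q ⬝ᵥ q = 4) (a₀ : ℝ) (a : ι → ℝ) :
    0 ≤ (p ⬝ᵥ p) * a₀ ^ 2 + 4 * a₀ * (p ⬝ᵥ a) + (p ⬝ᵥ a) ^ 2 - (q ⬝ᵥ a) ^ 2
      + (q ⬝ᵥ q) * (a ⬝ᵥ a) := by
  rcases (dotProduct_self_nonneg p).eq_or_lt with hP | hP
  · simp only [dotProduct_self_eq_zero.mp hP.symm, zero_dotProduct] at hpq4 ⊢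
    nlinarith [sq_dotProduct_le q a]
  · refine (mul_nonneg_iff_of_pos_left hP).mp ?_
    linear_combination sq_dotProduct_add_sq_dotProduct_le hpq a
      + sq_nonneg ((p ⬝ᵥ p) * a₀ + 2 * (p ⬝ᵥ a)) - (p ⬝ᵥ a) ^ 2 * hpq4

lemma add_sub_orthogonal_of_unit {u w : ι → ℝ} (hu : u ⬝ᵥ u = 1) (hw : w ⬝ᵥ w = 1) :
    (u + w) ⬝ᵥ (u - w) = 0 ∧ (u + w) ⬝ᵥ (u + w) + (u - w) ⬝ᵥ (u - w) = 4 := by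
  simp only [add_dotProduct, sub_dotProduct, dotProduct_add, dotProduct_sub, dotProduct_comm w u,
    hu, hw]
  constructor <;> ring

lemma maxwell_nonneg_of_unit (hB : Bᵀ = -B) {u w : ι → ℝ} (hu : u ⬝ᵥ u = 1)
    (hw : w ⬝ᵥ w = 1) (E : ι → ℝ) :
    0 ≤ (E + u ᵥ* B) ⬝ᵥ (E + w ᵥ* B) - (u ⬝ᵥ E) * (w ⬝ᵥ E)
      + (1 - u ⬝ᵥ w) * (frobeniusSq B - 2 * (E ⬝ᵥ E)) / 4 := by
  obtain ⟨hpq, hpq4⟩ := add_sub_orthogonal_of_unit hu hw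
  have h := maxwell_nonneg_of_orthogonal hB hpq hpq4 E
  simp only [add_vecMul, sub_vecMul, add_dotProduct, dotProduct_add, sub_dotProduct,
    dotProduct_sub, dotProduct_comm w u, dotProduct_comm E, dotProduct_comm (w ᵥ* B) (u ᵥ* B),
    hu, hw] at h ⊢
  linarith

lemma proca_nonneg_of_unit {u w : ι → ℝ} (hu : u ⬝ᵥ u = 1) (hw : w ⬝ᵥ w = 1) (a₀ : ℝ)
    (a : ι → ℝ) :
    0 ≤ (a₀ + a ⬝ᵥ u) * (a₀ + a ⬝ᵥ w) + (1 - u ⬝ᵥ w) * (a ⬝ᵥ a - a₀ ^ 2) / 2 := by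
  obtain ⟨hpq, hpq4⟩ := add_sub_orthogonal_of_unit hu hw
  have h := proca_nonneg_of_orthogonal hpq hpq4 a₀ a
  simp only [add_dotProduct, dotProduct_add, sub_dotProduct, dotProduct_sub, dotProduct_comm w u,
    dotProduct_comm a, hu, hw] at h ⊢
  linarith

end NullPairs

section Spacetime

variable {n N : ℕ}

lemma sum_etaMat_mul (c : Fin n) (g : Fin n → ℝ) :
    ∑ d, etaMat n c d * g d = (if (c : ℕ) = 0 then -1 else 1) * g c := by
  simp [etaMat]

lemma minkowski_comm (x y : Fin n → ℝ) : minkowski x y = minkowski y x := by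
  simp only [minkowski, mul_right_comm _ (x _)]

lemma minkowski_smul_add_smul_left (a b : ℝ) (x y z : Fin n → ℝ) :
    minkowski (a • x + b • y) z = a * minkowski x z + b * minkowski y z := by
  simp only [minkowski, Pi.add_apply, Pi.smul_apply, smul_eq_mul, Finset.mul_sum,
    ← Finset.sum_add_distrib]
  exact Finset.sum_congr rfl fun i _ => by ring

lemma minkowski_eq_head_tail (x y : Fin (N + 1) → ℝ) :
    minkowski x y = -(x 0 * y 0) + vecTail x ⬝ᵥ vecTail y := by
  simp [minkowski, Fin.sum_univ_succ, dotProduct, vecTail]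

lemma minkowski_cons (x₀ y₀ : ℝ) (x y : Fin N → ℝ) :
    minkowski (vecCons x₀ x : Fin (N + 1) → ℝ) (vecCons y₀ y) = -(x₀ * y₀) + x ⬝ᵥ y := by
  simp [minkowski_eq_head_tail]

lemma sum_mul_etaMat_mul_eq_minkowski (t u : Fin n → ℝ) (F : Matrix (Fin n) (Fin n) ℝ) :
    ∑ a, ∑ b, ∑ c, ∑ d, t a * u b * F a c * etaMat n c d * F b d
      = minkowski (t ᵥ* F) (u ᵥ* F) := by
  have h : ∀ a b c, ∑ d, t a * u b * F a c * etaMat n c d * F b d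
      = (if (c : ℕ) = 0 then -1 else 1) * (t a * F a c) * (u b * F b c) := by
    intro a b c
    simp only [mul_assoc, sum_etaMat_mul, ← Finset.mul_sum]
    ring
  simp only [h]
  simp only [minkowski, vecMul, dotProduct, Finset.mul_sum, Finset.sum_mul]
  rw [Finset.sum_comm_cycle]
  refine Finset.sum_congr rfl fun c _ => ?_
  rw [Finset.sum_comm]

lemma procaT_eq (F : Matrix (Fin n) (Fin n) ℝ) (A : Fin n → ℝ) (m : ℝ) (t u : Fin n → ℝ) :
    procaT F A m t u = minkowski (t ᵥ* F) (u ᵥ* F) - minkowski t u * FdotF F / 4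
      + m ^ 2 * ((A ⬝ᵥ t) * (A ⬝ᵥ u) - minkowski t u * minkowski A A / 2) := by
  rw [procaT, sum_mul_etaMat_mul_eq_minkowski]
  simp only [dotProduct]
  ring

lemma FdotF_eq_sum_minkowski (F : Matrix (Fin n) (Fin n) ℝ) :
    FdotF F = ∑ c : Fin n, (if (c : ℕ) = 0 then -1 else 1) * minkowski (F c) (F c) := by
  have h : ∀ c d, ∑ e, ∑ f, F c d * etaMat n c e * etaMat n d f * F e f
      = ∑ e, etaMat n c e * (F c d * ∑ f, etaMat n d f * F e f) := fun c d => by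
    simp only [Finset.mul_sum]
    exact Finset.sum_congr rfl fun e _ => Finset.sum_congr rfl fun f _ => by ring
  simp only [FdotF, h, sum_etaMat_mul, minkowski, Finset.mul_sum]
  exact Finset.sum_congr rfl fun c _ => Finset.sum_congr rfl fun d _ => by ring

variable (F : Matrix (Fin n) (Fin n) ℝ) (A : Fin n → ℝ) (m : ℝ)

lemma procaT_comm (x y : Fin n → ℝ) : procaT F A m x y = procaT F A m y x := by
  simp only [procaT_eq, minkowski_comm x y, minkowski_comm (x ᵥ* F)]
  ring

lemma procaT_smul_add_smul_left (a b : ℝ) (x y z : Fin n → ℝ) :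
    procaT F A m (a • x + b • y) z = a * procaT F A m x z + b * procaT F A m y z := by
  simp only [procaT_eq, add_vecMul, smul_vecMul, minkowski_smul_add_smul_left, dotProduct_add,
    dotProduct_smul, smul_eq_mul]
  ring

lemma procaT_neg_neg (x y : Fin n → ℝ) : procaT F A m (-x) (-y) = procaT F A m x y := by
  simp [procaT_eq, minkowski, neg_vecMul]

end Spacetime

section SpaceTimeSplit

variable {N : ℕ} {F : Matrix (Fin (N + 1)) (Fin (N + 1)) ℝ}

lemma cons_one_vecMul (hF : Fᵀ = -F) (u : Fin N → ℝ) :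
    (vecCons 1 u : Fin (N + 1) → ℝ) ᵥ* F
      = vecCons (-(u ⬝ᵥ vecTail (F 0))) (vecTail (F 0) + u ᵥ* F.submatrix Fin.succ Fin.succ) := by
  have hi0 := fun i : Fin N => apply_eq_neg_of_transpose_eq_neg hF i.succ 0
  ext j
  refine Fin.cases ?_ (fun j => ?_) j
  · simp [vecMul, dotProduct, Fin.sum_univ_succ, vecTail, hi0,
      apply_self_eq_zero_of_transpose_eq_neg hF 0]
  · simp [vecMul, dotProduct, Fin.sum_univ_succ, vecTail]

lemma FdotF_eq_frobeniusSq (hF : Fᵀ = -F) :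
    FdotF F
      = frobeniusSq (F.submatrix Fin.succ Fin.succ) - 2 * (vecTail (F 0) ⬝ᵥ vecTail (F 0)) := by
  have hi0 := fun i : Fin N => apply_eq_neg_of_transpose_eq_neg hF i.succ 0
  rw [FdotF_eq_sum_minkowski, Fin.sum_univ_succ]
  simp only [minkowski_eq_head_tail, hi0, apply_self_eq_zero_of_transpose_eq_neg hF 0, Fin.val_zero,
    Fin.val_succ, if_true, Nat.add_one_ne_zero, if_false, one_mul, neg_mul_neg, mul_zero, neg_zero,
    zero_add, Finset.sum_add_distrib, Finset.sum_neg_distrib]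
  have hE : ∑ i : Fin N, F 0 i.succ * F 0 i.succ = vecTail (F 0) ⬝ᵥ vecTail (F 0) := rfl
  have hB : frobeniusSq (F.submatrix Fin.succ Fin.succ)
      = ∑ i : Fin N, vecTail (F i.succ) ⬝ᵥ vecTail (F i.succ) := rfl
  rw [hE, hB]
  ring

lemma procaT_cons_one_nonneg (hF : Fᵀ = -F) (A : Fin (N + 1) → ℝ) (m : ℝ) {u w : Fin N → ℝ}
    (hu : u ⬝ᵥ u = 1) (hw : w ⬝ᵥ w = 1) :
    0 ≤ procaT F A m (vecCons 1 u) (vecCons 1 w) := by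
  obtain ⟨a₀, a, rfl⟩ : ∃ a₀ a, A = vecCons a₀ a := ⟨A 0, vecTail A, (cons_head_tail A).symm⟩
  have hB : (F.submatrix Fin.succ Fin.succ)ᵀ = -F.submatrix Fin.succ Fin.succ := by
    rw [transpose_submatrix, hF]; rfl
  have hM := maxwell_nonneg_of_unit hB hu hw (vecTail (F 0))
  have hP := mul_nonneg (sq_nonneg m) (proca_nonneg_of_unit hu hw a₀ a)
  rw [procaT_eq, cons_one_vecMul hF, cons_one_vecMul hF, minkowski_cons, minkowski_cons,
    minkowski_cons, FdotF_eq_frobeniusSq hF, cons_dotProduct_cons, cons_dotProduct_cons]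
  linarith

end SpaceTimeSplit

section Causal

variable {N : ℕ}

lemma exists_unit_smul_eq (x : Fin (N + 1) → ℝ) :
    ∃ u : Fin (N + 1) → ℝ, u ⬝ᵥ u = 1 ∧ x = √(x ⬝ᵥ x) • u := by
  by_cases hx : x = 0
  · exact ⟨Pi.single 0 1, by simp, by simp [hx]⟩
  · have hx' : x ⬝ᵥ x ≠ 0 := dotProduct_self_eq_zero.not.mpr hx
    have hr : √(x ⬝ᵥ x) ≠ 0 := by simpa [Real.sqrt_eq_zero (dotProduct_self_nonneg x)] using hx'
    refine ⟨(√(x ⬝ᵥ x))⁻¹ • x, ?_, by rw [smul_smul, mul_inv_cancel₀ hr, one_smul]⟩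
    rw [smul_dotProduct, dotProduct_smul, smul_eq_mul, smul_eq_mul, ← mul_assoc, ← mul_inv,
      Real.mul_self_sqrt (dotProduct_self_nonneg x), inv_mul_cancel₀ hx']

lemma exists_null_decomposition {x₀ : ℝ} {x : Fin (N + 1) → ℝ} (hx : x ⬝ᵥ x ≤ x₀ ^ 2)
    (hx₀ : 0 ≤ x₀) :
    ∃ u : Fin (N + 1) → ℝ, u ⬝ᵥ u = 1 ∧ ∃ a b : ℝ, 0 ≤ a ∧ 0 ≤ b ∧
      vecCons x₀ x = a • vecCons 1 u + b • vecCons 1 (-u) := by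
  obtain ⟨u, hu, hxu⟩ := exists_unit_smul_eq x
  have hr : √(x ⬝ᵥ x) ≤ x₀ := Real.sqrt_le_iff.mpr ⟨hx₀, hx⟩
  set r := √(x ⬝ᵥ x)
  refine ⟨u, hu, (x₀ + r) / 2, (x₀ - r) / 2, by positivity, by linarith, ?_⟩
  rw [smul_cons, smul_cons, cons_add_cons, hxu]
  congr 1
  · simp only [smul_eq_mul]; ring
  · module

end Causal

section DominantEnergy

variable {N : ℕ}

lemma procaT_nonneg_of_causal {F : Matrix (Fin (N + 2)) (Fin (N + 2)) ℝ} (hF : Fᵀ = -F)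
    (A : Fin (N + 2) → ℝ) (m : ℝ) {t₀ ξ₀ : ℝ} {t ξ : Fin (N + 1) → ℝ}
    (ht : t ⬝ᵥ t ≤ t₀ ^ 2) (ht₀ : 0 ≤ t₀) (hξ : ξ ⬝ᵥ ξ ≤ ξ₀ ^ 2) (hξ₀ : 0 ≤ ξ₀) :
    0 ≤ procaT F A m (vecCons t₀ t) (vecCons ξ₀ ξ) := by
  obtain ⟨u, hu, a, b, ha, hb, htu⟩ := exists_null_decomposition ht ht₀
  obtain ⟨w, hw, c, d, hc, hd, hξw⟩ := exists_null_decomposition hξ hξ₀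
  have hu' : -u ⬝ᵥ -u = 1 := by rwa [neg_dotProduct_neg]
  have hw' : -w ⬝ᵥ -w = 1 := by rwa [neg_dotProduct_neg]
  have hnull : ∀ {u w : Fin (N + 1) → ℝ}, u ⬝ᵥ u = 1 → w ⬝ᵥ w = 1 →
      0 ≤ procaT F A m (vecCons 1 u) (vecCons 1 w) := procaT_cons_one_nonneg hF A m
  rw [htu, hξw, procaT_smul_add_smul_left, procaT_comm F A m (vecCons 1 u),
    procaT_comm F A m (vecCons 1 (-u)), procaT_smul_add_smul_left, procaT_smul_add_smul_left]
  exact add_nonneg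
    (mul_nonneg ha (add_nonneg (mul_nonneg hc (hnull hw hu)) (mul_nonneg hd (hnull hw' hu))))
    (mul_nonneg hb (add_nonneg (mul_nonneg hc (hnull hw hu')) (mul_nonneg hd (hnull hw' hu'))))

lemma pos_of_coOriented {t₀ ξ₀ : ℝ} {t ξ : Fin N → ℝ} (ht : t ⬝ᵥ t < t₀ ^ 2)
    (hξ : ξ ⬝ᵥ ξ < ξ₀ ^ 2) (htξ : t ⬝ᵥ ξ < t₀ * ξ₀) (ht₀ : 0 < t₀) : 0 < ξ₀ := by
  by_contra! h
  have hlt : (t₀ * ξ₀) ^ 2 < (t ⬝ᵥ ξ) ^ 2 := by nlinarith [mul_nonpos_of_nonneg_of_nonpos ht₀.le h]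
  have hcs : (t ⬝ᵥ t) * (ξ ⬝ᵥ ξ) < (t₀ * ξ₀) ^ 2 := by
    rw [mul_pow]
    exact mul_lt_mul'' ht hξ (dotProduct_self_nonneg t) (dotProduct_self_nonneg ξ)
  linarith [sq_dotProduct_le t ξ]

lemma procaT_nonneg_of_coOriented {F : Matrix (Fin (N + 2)) (Fin (N + 2)) ℝ} (hF : Fᵀ = -F)
    (A : Fin (N + 2) → ℝ) (m : ℝ) {t ξ : Fin (N + 2) → ℝ} (ht : minkowski t t < 0)
    (hξ : minkowski ξ ξ < 0) (htξ : minkowski t ξ < 0) :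
    0 ≤ procaT F A m t ξ := by
  obtain ⟨t₀, t, rfl⟩ : ∃ t₀ t', t = vecCons t₀ t' := ⟨_, _, (cons_head_tail t).symm⟩
  obtain ⟨ξ₀, ξ, rfl⟩ : ∃ ξ₀ ξ', ξ = vecCons ξ₀ ξ' := ⟨_, _, (cons_head_tail ξ).symm⟩
  rw [minkowski_cons] at ht hξ htξ
  replace ht : t ⬝ᵥ t < t₀ ^ 2 := by linarith
  replace hξ : ξ ⬝ᵥ ξ < ξ₀ ^ 2 := by linarith
  replace htξ : t ⬝ᵥ ξ < t₀ * ξ₀ := by linarith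
  wlog ht₀ : 0 < t₀ generalizing t₀ t ξ₀ ξ
  · have ht₀' : t₀ < 0 := by
      refine lt_of_le_of_ne (not_lt.mp ht₀) fun h => ?_
      nlinarith [dotProduct_self_nonneg t]
    rw [← procaT_neg_neg, neg_cons, neg_cons]
    exact this (-t₀) (-t) (-ξ₀) (-ξ) (by simpa using ht) (by simpa using hξ)
      (by simpa using htξ) (by linarith)
  have hξ₀ := pos_of_coOriented ht hξ htξ ht₀
  exact procaT_nonneg_of_causal hF A m ht.le ht₀.le hξ.le hξ₀.le

lemma procaT_fin_one {F : Matrix (Fin 1) (Fin 1) ℝ} (hF : Fᵀ = -F) (A : Fin 1 → ℝ) (m : ℝ)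
    (t ξ : Fin 1 → ℝ) : procaT F A m t ξ = m ^ 2 * A 0 ^ 2 * (t 0 * ξ 0) / 2 := by
  simp only [procaT, minkowski, FdotF, etaMat, Fin.sum_univ_one, Fin.val_zero, if_pos,
    apply_self_eq_zero_of_transpose_eq_neg hF 0]
  ring

end DominantEnergy

/-- The Maxwell/Proca field satisfies the dominant energy condition pointwise,
off-shell: `T(t,ξ) ≥ 0` for all co-oriented timelike vectors `t, ξ`. -/
theorem maxwell_proca_dec
    (n : ℕ) (hn : 1 ≤ n) (F : Matrix (Fin n) (Fin n) ℝ)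
    (hF : ∀ a b : Fin n, F a b = -F b a)
    (A : Fin n → ℝ) (m : ℝ) :
    ∀ t ξ : Fin n → ℝ, minkowski t t < 0 → minkowski ξ ξ < 0 →
      minkowski t ξ < 0 → 0 ≤ procaT F A m t ξ := by
  intro t ξ ht hξ htξ
  have hskew : Fᵀ = -F := by ext a b; exact hF b a
  obtain ⟨N, rfl⟩ : ∃ N, n = N + 1 := ⟨n - 1, by omega⟩
  cases N with
  | zero =>
    have htξ' : 0 < t 0 * ξ 0 := by simpa [minkowski] using htξ
    rw [procaT_fin_one hskew]
    positivity
  | succ N => exact procaT_nonneg_of_coOriented hskew A m ht hξ htξ
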